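/- If A and B are n×n positive semidefinite real matrices, then det(A+B) ≥ det(A) + det(B). -/

import Mathlib

/-!
If `A` is positive definite and `B = Rᴴ R`, the matrix determinant lemma gives
`det (A + B) = det A * det (1 + C)` with `C = R A⁻¹ Rᴴ` positive semidefinite and
`det A * det C = det B`. For eigenvalues `λᵢ ≥ 0` of `C` on a nonempty index set,
`∏ (1 + λᵢ) ≥ 1 + ∏ λᵢ`, which is the inequality. If neither `A` nor `B` is positive
definite, both determinants vanish and `det (A + B) ≥ 0`.
-/

open scoped MatrixOrder

namespace Matrix

variable {n : Type*} [Fintype n] [DecidableEq n]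

theorem IsHermitian.det_cfc {𝕜 : Type*} [RCLike 𝕜] {A : Matrix n n 𝕜} (hA : A.IsHermitian)
    (f : ℝ → ℝ) : (cfc f A).det = ∏ i, (f (hA.eigenvalues i) : 𝕜) := by
  rw [hA.cfc_eq]
  simp [IsHermitian.cfc, -Unitary.conjStarAlgAut_apply]

theorem IsHermitian.det_one_add {𝕜 : Type*} [RCLike 𝕜] {A : Matrix n n 𝕜}
    (hA : A.IsHermitian) : (1 + A).det = ∏ i, (1 + hA.eigenvalues i : 𝕜) := by
  have h : 1 + A = cfc (fun x : ℝ => 1 + x) A := by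
    rw [cfc_const_add _ _ A, cfc_id' ℝ A, map_one]
  rw [h, hA.det_cfc]
  push_cast
  rfl

theorem PosSemidef.one_add_det_le_det_one_add [Nonempty n] {A : Matrix n n ℝ}
    (hA : A.PosSemidef) : 1 + A.det ≤ (1 + A).det := by
  obtain ⟨i⟩ := ‹Nonempty n›
  have hev := hA.eigenvalues_nonneg
  rw [hA.isHermitian.det_one_add, hA.isHermitian.det_eq_prod_eigenvalues]
  simp only [RCLike.ofReal_real_eq_id, id]
  calc 1 + ∏ i, hA.isHermitian.eigenvalues i
      = ∏ _i : n, (1 : ℝ) + ∏ i, hA.isHermitian.eigenvalues i := by rw [Finset.prod_const_one]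
    _ ≤ _ := Finset.prod_add_prod_le (Finset.mem_univ i) le_rfl
      (fun j _ _ => le_add_of_nonneg_right (hev j))
      (fun j _ _ => le_add_of_nonneg_left zero_le_one) (fun _ _ => zero_le_one)
      (fun j _ => hev j)

theorem PosDef.det_add_det_le_det_add [Nonempty n] {A B : Matrix n n ℝ} (hA : A.PosDef)
    (hB : B.PosSemidef) : A.det + B.det ≤ (A + B).det := by
  obtain ⟨R, rfl⟩ := CStarAlgebra.nonneg_iff_eq_star_mul_self.mp hB.nonneg
  have hdetA : IsUnit A.det := hA.isUnit.map detMonoidHom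
  set C := R * A⁻¹ * star R
  have hC : C.PosSemidef := hA.inv.posSemidef.mul_mul_conjTranspose_same R
  have hdetC : A.det * C.det = (star R * R).det := by
    rw [det_mul, det_mul, det_mul, det_nonsing_inv, Ring.inverse_eq_inv']
    field_simp [hA.det_pos.ne']
  calc A.det + (star R * R).det = A.det * (1 + C.det) := by rw [← hdetC]; ring
    _ ≤ A.det * (1 + C).det :=
      mul_le_mul_of_nonneg_left hC.one_add_det_le_det_one_add hA.det_pos.le
    _ = (A + star R * R).det := (det_add_mul (star R) R hdetA).symm

theorem PosSemidef.det_add_det_le_det_add [Nonempty n] {A B : Matrix n n ℝ} (hA : A.PosSemidef)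
    (hB : B.PosSemidef) : A.det + B.det ≤ (A + B).det := by
  by_cases hA' : A.PosDef
  · exact hA'.det_add_det_le_det_add hB
  by_cases hB' : B.PosDef
  · rw [add_comm A.det, add_comm A]
    exact hB'.det_add_det_le_det_add hA
  rw [hA.posDef_iff_det_ne_zero, not_not] at hA'
  rw [hB.posDef_iff_det_ne_zero, not_not] at hB'
  simpa [hA', hB'] using (hA.add hB).det_nonneg

end Matrix

theorem det_superadditive_psd (n : ℕ) (hn : 0 < n)
    (A B : Matrix (Fin n) (Fin n) ℝ)
    (hA : A.PosSemidef) (hB : B.PosSemidef) :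
    A.det + B.det ≤ (A + B).det :=
  have : Nonempty (Fin n) := ⟨⟨0, hn⟩⟩
  hA.det_add_det_le_det_add hB
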